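/- arXiv:1403.6788 — 2 statements merged into one kernel-verified Lean document; each statement's English description precedes it below -/
import Mathlib

section
/- Let A be a unital C*-algebra with T(A) ≠ ∅ and let a ∈ M_k(A) be positive. Suppose there are real numbers 0 < α < β such that α < d_τ(a) < β for every τ in a closed subset Y of T(A). Then there exist ε > 0 and an open neighborhood U of Y in T(A) such that α < d_τ((a − ε)₊) < β for all τ ∈ U. -/
open Filter Set Topology MeasureTheory
open scoped ComplexOrder Matrix.Norms.L2Operator

noncomputable section

universe u v

/-- A tracial state on a unital C*-algebra `A`, viewed as an element of the weak-* dual: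
a positive linear functional `τ` with `τ 1 = 1` and `τ (a b) = τ (b a)`. -/
def IsTracialState (A : Type u) [CStarAlgebra A] (τ : WeakDual ℂ A) : Prop :=
  τ 1 = 1 ∧ (∀ a : A, 0 ≤ τ (star a * a)) ∧ ∀ a b : A, τ (a * b) = τ (b * a)

/-- The tracial state space `T(A)`, as a subset of the weak-* dual (so that it carries the
weak-* topology). -/
def TS (A : Type u) [CStarAlgebra A] : Set (WeakDual ℂ A) := {τ | IsTracialState A τ}

/-- `d_φ(a) = sup_{n ≥ 1} φ(f_{1/n}(a))`, where `f_η(t) = min (t/η) 1`, for a (positive)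
linear functional `φ` on a unital C*-algebra `B`. -/
noncomputable def dRank {B : Type v} [CStarAlgebra B] (φ : B → ℂ) (a : B) : ℝ :=
  ⨆ n : ℕ, (φ (cfc (fun t : ℝ => min (((n : ℝ) + 1) * t) 1) a)).re

/-- The matrix algebra `M_k(A)` (as a star `ℂ`-algebra). -/
abbrev Mat (k : ℕ) (A : Type u) : Type u := Matrix (Fin k) (Fin k) A

/-- The unnormalized trace `τ_k((a_ij)) = ∑ i, τ (a_ii)` on `M_k(A)`, transported to a
C*-algebra `B` which realizes `M_k(A)` via a star-algebra isomorphism `e`. -/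
noncomputable def matTr {A : Type u} [CStarAlgebra A] {k : ℕ} {B : Type v} [CStarAlgebra B]
    (τ : WeakDual ℂ A) (e : Mat k A ≃⋆ₐ[ℂ] B) : B → ℂ :=
  fun b => ∑ i, τ (e.symm b i i)

/-- `(a - ε)₊`, via the continuous functional calculus. -/
noncomputable def cutMinus {B : Type v} [CStarAlgebra B] (a : B) (ε : ℝ) : B :=
  cfc (fun t : ℝ => max (t - ε) 0) a

/-- `f_η(a)` where `f_η(t) = min (t/η) 1`, via the continuous functional calculus. -/
noncomputable def fEtaCFC {B : Type v} [CStarAlgebra B] (η : ℝ) (a : B) : B :=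
  cfc (fun t : ℝ => min (t / η) 1) a

/-- `a^{1/2}`, via the continuous functional calculus. -/
noncomputable def sqrtCFC {B : Type v} [CStarAlgebra B] (a : B) : B :=
  cfc (fun t : ℝ => Real.sqrt t) a

/-- Cuntz subequivalence `a ≾ b` in a C*-algebra `B`. -/
def CuntzBelow {B : Type v} [CStarAlgebra B] (a b : B) : Prop :=
  ∃ x : ℕ → B, Tendsto (fun n => ‖x n * b * star (x n) - a‖) atTop (𝓝 0)

/-- The upper-left-corner embedding of `M_k(A)` into `M_m(A)`. -/
def matInc {A : Type u} [Zero A] {k m : ℕ} (M : Mat k A) : Mat m A :=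
  Matrix.of fun i j => if h : (i : ℕ) < k ∧ (j : ℕ) < k then M ⟨i.1, h.1⟩ ⟨j.1, h.2⟩ else 0

/-- Strict comparison of positive elements: for positive `a ∈ M_k(A)`, `b ∈ M_l(A)`,
if `d_τ(a) < d_τ(b)` for every tracial state `τ`, then `a ≾ b` in `M_{max k l}(A)`
(realized as a C*-algebra `B` via a star-algebra isomorphism). -/
def StrictComparison (A : Type u) [CStarAlgebra A] : Prop :=
  ∀ (k l : ℕ) (B : Type u) (_ : CStarAlgebra B) (_ : PartialOrder B) (_ : StarOrderedRing B)
    (e : Mat (max k l) A ≃⋆ₐ[ℂ] B) (a : Mat k A) (b : Mat l A),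
    0 ≤ e (matInc a) → 0 ≤ e (matInc b) →
    (∀ τ ∈ TS A, dRank (matTr τ e) (e (matInc a)) < dRank (matTr τ e) (e (matInc b))) →
    CuntzBelow (e (matInc a)) (e (matInc b))

/-- The extreme boundary `∂_e T(A)` of the tracial state space. -/
def extTS (A : Type u) [CStarAlgebra A] : Set (WeakDual ℂ A) :=
  Set.extremePoints ℝ (TS A)

/-- A C*-algebra is simple if its only closed two-sided ideals are `0` and the whole algebra. -/
def IsSimpleCStar (A : Type u) [CStarAlgebra A] : Prop :=
  ∀ I : TwoSidedIdeal A, IsClosed (I : Set A) → (I : Set A) = {0} ∨ (I : Set A) = Set.univ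

/-- `F_σ` subsets: countable unions of closed sets. -/
def IsFSigmaIn {E : Type v} [TopologicalSpace E] (X : Set E) : Prop :=
  ∃ C : ℕ → Set E, (∀ n, IsClosed (C n)) ∧ X = ⋃ n, C n

/-- Covering dimension at most `m`: every finite open cover admits a finite open refinement
in which every point lies in at most `m + 1` members. -/
def CovDimLE (X : Type v) [TopologicalSpace X] (m : ℕ) : Prop :=
  ∀ (n : ℕ) (U : Fin n → Set X), (∀ i, IsOpen (U i)) → (⋃ i, U i) = univ →
    ∃ (p : ℕ) (V : Fin p → Set X), (∀ j, IsOpen (V j)) ∧ (⋃ j, V j) = univ ∧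
      (∀ j, ∃ i, V j ⊆ U i) ∧ ∀ x : X, {j | x ∈ V j}.ncard ≤ m + 1

/-- Zero-dimensionality: the topology has a basis of clopen sets. -/
def ZeroDim (X : Type v) [TopologicalSpace X] : Prop :=
  ∀ (x : X) (U : Set X), IsOpen U → x ∈ U → ∃ V : Set X, IsClopen V ∧ x ∈ V ∧ V ⊆ U

/-- Real-valued functions that are affine on `T(A)`. -/
def AffineOnTS {A : Type u} [CStarAlgebra A] (f : WeakDual ℂ A → ℝ) : Prop :=
  ∀ σ ∈ TS A, ∀ σ' ∈ TS A, ∀ t : ℝ, 0 ≤ t → t ≤ 1 →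
    f (t • σ + (1 - t) • σ') = t * f σ + (1 - t) * f σ'

/-- A Borel measure `μ` represents `τ` if `f τ = ∫ f dμ` for every weak-* continuous
affine real-valued function `f` on `T(A)`. -/
def Represents {A : Type u} [CStarAlgebra A] [MeasurableSpace (WeakDual ℂ A)]
    (μ : Measure (WeakDual ℂ A)) (τ : WeakDual ℂ A) : Prop :=
  ∀ f : WeakDual ℂ A → ℝ, ContinuousOn f (TS A) → AffineOnTS f → f τ = ∫ σ, f σ ∂μ

/-- A metric space structure is compatible if it induces the given topology. -/
def CompatibleMetric (X : Type v) [t : TopologicalSpace X] (m : MetricSpace X) : Prop :=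
  m.toUniformSpace.toTopologicalSpace = t

/-- Positivity of a matrix over a star ring: `M = Nᴴ * N` for some `N`. -/
def MatPos {R : Type v} [Ring R] [StarRing R] {n : ℕ} (M : Matrix (Fin n) (Fin n) R) : Prop :=
  ∃ N : Matrix (Fin n) (Fin n) R, M = N.conjTranspose * N

/-- Completely positive `ℂ`-linear maps: all matrix amplifications preserve positivity. -/
def IsCP {R : Type u} {S : Type v} [Ring R] [StarRing R] [Algebra ℂ R]
    [Ring S] [StarRing S] [Algebra ℂ S] (φ : R →ₗ[ℂ] S) : Prop :=
  ∀ (n : ℕ) (M : Matrix (Fin n) (Fin n) R), MatPos M → MatPos (M.map ⇑φ)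

/-- Completely positive contractive (cpc) maps. -/
def IsCPC {R : Type u} {S : Type v} [NormedRing R] [StarRing R] [NormedAlgebra ℂ R]
    [NormedRing S] [StarRing S] [NormedAlgebra ℂ S] (φ : R →ₗ[ℂ] S) : Prop :=
  IsCP φ ∧ ∀ x : R, ‖φ x‖ ≤ ‖x‖

/-- cpc order zero maps from `M_k(ℂ)` (with the operator norm) into `S`:
cpc maps preserving orthogonality of positive elements. -/
def IsCPCOrderZero {S : Type v} [NormedRing S] [StarRing S] [NormedAlgebra ℂ S] {k : ℕ}
    (φ : Matrix (Fin k) (Fin k) ℂ →ₗ[ℂ] S) : Prop :=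
  IsCPC φ ∧ ∀ x y : Matrix (Fin k) (Fin k) ℂ, x.PosSemidef → y.PosSemidef → x * y = 0 →
    φ x * φ y = 0

/-- Nuclearity, via the completely positive approximation property. -/
def IsNuclear (A : Type u) [CStarAlgebra A] : Prop :=
  ∀ (G : Finset A) (ε : ℝ), 0 < ε →
    ∃ (n : ℕ) (ψ : A →ₗ[ℂ] Matrix (Fin n) (Fin n) ℂ) (φ : Matrix (Fin n) (Fin n) ℂ →ₗ[ℂ] A),
      IsCPC ψ ∧ IsCPC φ ∧ ∀ a ∈ G, ‖φ (ψ a) - a‖ < ε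

/-!
Put `g_c(t) = min (c t) 1`, so that `d_τ(a) = sup_n τ_k(g_{n+1}(a))`. From
`g_c(t) ≤ g_c((t - ε)₊) + c ε` we get `τ_k(g_{n+1}(a)) - (n + 1) ε k ≤ d_τ((a - ε)₊)`, whose left
side is jointly continuous in `(ε, τ)` and exceeds `α` at `(0, τ)` for a suitable `n` when
`τ ∈ Y`. Tracial states have norm at most `4`, so `Y` is weak-* compact, and a single `ε` and a
single neighbourhood of `Y` give the lower bound. For the upper bound,
`d_τ((a - ε)₊) ≤ τ_k(f_ε(a)) ≤ d_τ(a)`, and the middle term is continuous in `τ`.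
-/

section TracialState

variable {A : Type u} [CStarAlgebra A]

lemma norm_apply_le_of_mem_TS {τ : WeakDual ℂ A} (hτ : τ ∈ TS A) (x : A) :
    ‖τ x‖ ≤ 4 * ‖x‖ := by
  let _ := CStarAlgebra.spectralOrder A
  have _ := CStarAlgebra.spectralOrderedRing A
  let φ : A →ₚ[ℂ] ℂ := .mk₀ (τ : A →L[ℂ] ℂ).toLinearMap fun y hy => by
    obtain ⟨b, rfl⟩ := CStarAlgebra.nonneg_iff_eq_star_mul_self.1 hy
    exact hτ.2.1 b
  have hφ (y : A) (hy : 0 ≤ y) : ‖τ y‖ ≤ ‖y‖ := by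
    have h := φ.norm_apply_le_of_nonneg y hy
    change ‖τ y‖ ≤ ‖τ 1‖ * ‖y‖ at h
    simpa [hτ.1] using h
  obtain ⟨y, hy0, hyx, hx⟩ := CStarAlgebra.exists_sum_four_nonneg x
  calc ‖τ x‖ = ‖∑ i : Fin 4, Complex.I ^ (i : ℕ) * τ (y i)‖ := by
        rw [hx, map_sum]; simp
    _ ≤ ∑ i : Fin 4, ‖τ (y i)‖ := (norm_sum_le _ _).trans (by simp)
    _ ≤ ∑ _i : Fin 4, ‖x‖ := Finset.sum_le_sum fun i _ => (hφ _ (hy0 i)).trans (hyx i)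
    _ = 4 * ‖x‖ := by simp

lemma isCompact_of_isClosed_of_subset_TS {Y : Set (WeakDual ℂ A)} (hYc : IsClosed Y)
    (hYT : Y ⊆ TS A) : IsCompact Y :=
  (WeakDual.isCompact_closedBall (0 : StrongDual ℂ A) 4).of_isClosed_subset hYc fun τ hτ => by
    simpa using ContinuousLinearMap.opNorm_le_bound (WeakDual.toStrongDual τ) (by norm_num)
      (norm_apply_le_of_mem_TS (hYT hτ))

variable {k : ℕ} {B : Type v} [CStarAlgebra B] (e : Mat k A ≃⋆ₐ[ℂ] B)

lemma continuous_re_matTr (b : B) : Continuous fun σ : WeakDual ℂ A => (matTr σ e b).re :=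
  Complex.continuous_re.comp (continuous_finsetSum _ fun _ _ => WeakDual.eval_continuous _)

lemma matTr_one {τ : WeakDual ℂ A} (hτ : τ ∈ TS A) : matTr τ e 1 = k := by
  simp [matTr, hτ.1]

variable [PartialOrder B] [StarOrderedRing B]

lemma matTr_nonneg {τ : WeakDual ℂ A} (hτ : τ ∈ TS A) {b : B} (hb : 0 ≤ b) :
    0 ≤ matTr τ e b := by
  obtain ⟨c, rfl⟩ := CStarAlgebra.nonneg_iff_eq_star_mul_self.1 hb
  refine Finset.sum_nonneg fun i _ => ?_
  simp only [map_mul, map_star, Matrix.mul_apply, Matrix.star_apply, map_sum]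
  exact Finset.sum_nonneg fun j _ => hτ.2.1 _

def matTrPos {τ : WeakDual ℂ A} (hτ : τ ∈ TS A) : B →ₚ[ℂ] ℂ :=
  .mk₀
    { toFun := matTr τ e
      map_add' := by simp [matTr, Finset.sum_add_distrib]
      map_smul' := by simp [matTr, Finset.mul_sum] }
    fun _ => matTr_nonneg e hτ

@[simp]
lemma coe_matTrPos {τ : WeakDual ℂ A} (hτ : τ ∈ TS A) :
    ⇑(matTrPos e hτ) = matTr τ e :=
  rfl

end TracialState

def cutoff (c t : ℝ) : ℝ := min (c * t) 1

lemma continuous_cutoff (c : ℝ) : Continuous (cutoff c) :=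
  (continuous_const.mul continuous_id).min continuous_const

lemma cutoff_le_one (c t : ℝ) : cutoff c t ≤ 1 := min_le_right _ _

lemma cutoff_le_cutoff_posPart_add {c ε : ℝ} (hc : 0 ≤ c) (hε : 0 ≤ ε) (t : ℝ) :
    cutoff c t ≤ cutoff c (max (t - ε) 0) + c * ε := by
  have : c * t ≤ c * max (t - ε) 0 + c * ε := by
    rw [← mul_add]; exact mul_le_mul_of_nonneg_left (by linarith [le_max_left (t - ε) 0]) hc
  calc cutoff c t ≤ min (c * max (t - ε) 0 + c * ε) (1 + c * ε) :=
        min_le_min this (le_add_of_nonneg_right (mul_nonneg hc hε))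
    _ = _ := min_add_add_right _ _ _

lemma cutoff_posPart_le {c ε t : ℝ} (hε : 0 < ε) (ht : 0 ≤ t) :
    cutoff c (max (t - ε) 0) ≤ min (t / ε) 1 := by
  rcases le_or_gt t ε with h | h
  · simp [cutoff, max_eq_right (sub_nonpos.2 h), div_nonneg ht hε.le]
  · simpa [(one_le_div hε).2 h.le] using cutoff_le_one c _

lemma le_cutoff {c ε t : ℝ} (ht : 0 ≤ t) (hc : 1 / ε ≤ c) :
    min (t / ε) 1 ≤ cutoff c t := by
  refine min_le_min ?_ le_rfl
  rw [div_eq_mul_one_div, mul_comm]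
  exact mul_le_mul_of_nonneg_right hc ht

lemma dRank_eq_iSup_cutoff {B : Type v} [CStarAlgebra B] (ψ : B → ℂ) (a : B) :
    dRank ψ a = ⨆ n : ℕ, (ψ (cfc (cutoff (n + 1)) a)).re := rfl

namespace PositiveLinearMap

lemma re_apply_mono {E : Type*} [AddCommMonoid E] [PartialOrder E] [Module ℂ E]
    (φ : E →ₚ[ℂ] ℂ) {x y : E} (h : x ≤ y) : (φ x).re ≤ (φ y).re :=
  (Complex.le_def.1 (OrderHomClass.mono φ h)).1

variable {B : Type v} [CStarAlgebra B] [PartialOrder B] [StarOrderedRing B] (φ : B →ₚ[ℂ] ℂ)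

lemma re_apply_cfc_le {f g : ℝ → ℝ} {a : B} (h : ∀ t ∈ spectrum ℝ a, f t ≤ g t)
    (hf : Continuous f) (hg : Continuous g) : (φ (cfc f a)).re ≤ (φ (cfc g a)).re :=
  φ.re_apply_mono (cfc_mono h hf.continuousOn hg.continuousOn)

lemma re_apply_cfc_cutoff_le_dRank (a : B) (n : ℕ) :
    (φ (cfc (cutoff (n + 1)) a)).re ≤ dRank φ a := by
  refine le_ciSup (f := fun n : ℕ => (φ (cfc (cutoff (n + 1)) a)).re) ⟨(φ 1).re, ?_⟩ n
  rintro _ ⟨m, rfl⟩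
  exact φ.re_apply_mono (cfc_le_one _ _ fun t _ => cutoff_le_one _ t)

lemma re_apply_cfc_cutoff_le_dRank_cutMinus_add {a : B} (ha : IsSelfAdjoint a) (n : ℕ)
    {ε : ℝ} (hε : 0 ≤ ε) :
    (φ (cfc (cutoff (n + 1)) a)).re ≤ dRank φ (cutMinus a ε) + (n + 1) * ε * (φ 1).re := by
  have hc : (0 : ℝ) ≤ n + 1 := by positivity
  have hcut : Continuous fun t : ℝ => max (t - ε) 0 := by fun_prop
  have hcomp : cfc (fun t => cutoff (n + 1) (max (t - ε) 0)) a
      = cfc (cutoff (n + 1)) (cutMinus a ε) :=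
    cfc_comp' (cutoff (n + 1)) _ a (continuous_cutoff _).continuousOn hcut.continuousOn
  calc (φ (cfc (cutoff (n + 1)) a)).re
      ≤ (φ (cfc (fun t => cutoff (n + 1) (max (t - ε) 0) + (n + 1) * ε) a)).re :=
        φ.re_apply_cfc_le (fun t _ => cutoff_le_cutoff_posPart_add hc hε t)
          (continuous_cutoff _) (((continuous_cutoff _).comp hcut).add continuous_const)
    _ = (φ (cfc (cutoff (n + 1)) (cutMinus a ε))).re + (n + 1) * ε * (φ 1).re := by
        rw [cfc_add_const _ (fun t => cutoff (n + 1) (max (t - ε) 0)) a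
          ((continuous_cutoff _).comp hcut).continuousOn, hcomp, map_add,
          Algebra.algebraMap_eq_smul_one, φ.map_smul_of_tower]
        simp
    _ ≤ _ := by gcongr; exact φ.re_apply_cfc_cutoff_le_dRank _ n

lemma dRank_cutMinus_le_re_fEtaCFC {a : B} (ha : 0 ≤ a) {ε : ℝ} (hε : 0 < ε) :
    dRank φ (cutMinus a ε) ≤ (φ (fEtaCFC ε a)).re := by
  rw [dRank_eq_iSup_cutoff]
  refine ciSup_le fun n => ?_
  have hcut : Continuous fun t : ℝ => max (t - ε) 0 := by fun_prop
  rw [cutMinus, ← cfc_comp' (cutoff (n + 1)) _ a (continuous_cutoff _).continuousOn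
    hcut.continuousOn]
  exact φ.re_apply_cfc_le (fun t ht => cutoff_posPart_le hε (spectrum_nonneg_of_nonneg ha ht))
    ((continuous_cutoff _).comp hcut) ((continuous_id.div_const ε).min continuous_const)

lemma re_fEtaCFC_le_dRank {a : B} (ha : 0 ≤ a) (ε : ℝ) :
    (φ (fEtaCFC ε a)).re ≤ dRank φ a := by
  have hM : 1 / ε ≤ (⌈1 / ε⌉₊ : ℝ) + 1 := (Nat.le_ceil _).trans (by linarith)
  refine le_trans ?_ (φ.re_apply_cfc_cutoff_le_dRank a ⌈1 / ε⌉₊)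
  exact φ.re_apply_cfc_le (fun t ht => le_cutoff (spectrum_nonneg_of_nonneg ha ht) hM)
    ((continuous_id.div_const ε).min continuous_const) (continuous_cutoff _)

end PositiveLinearMap

section LowerBound

variable {A : Type u} [CStarAlgebra A] {k : ℕ} {B : Type v} [CStarAlgebra B] [PartialOrder B]
  [StarOrderedRing B] (e : Mat k A ≃⋆ₐ[ℂ] B) {a : B} {α : ℝ}

lemma eventually_lt_dRank_cutMinus (ha : IsSelfAdjoint a) {τ : WeakDual ℂ A}
    (hτ : α < dRank (matTr τ e) a) :
    ∀ᶠ p : ℝ × WeakDual ℂ A in 𝓝 (0, τ),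
      0 ≤ p.1 → p.2 ∈ TS A → α < dRank (matTr p.2 e) (cutMinus a p.1) := by
  rw [dRank_eq_iSup_cutoff] at hτ
  obtain ⟨n, hn⟩ := exists_lt_of_lt_ciSup hτ
  have hcont : Continuous fun p : ℝ × WeakDual ℂ A =>
      (matTr p.2 e (cfc (cutoff (n + 1)) a)).re - (n + 1) * p.1 * k :=
    ((continuous_re_matTr e _).comp continuous_snd).sub (by fun_prop)
  filter_upwards [(hcont.tendsto (0, τ)).eventually_const_lt (by simpa using hn)]
    with p hp hε hσ
  have := (matTrPos e hσ).re_apply_cfc_cutoff_le_dRank_cutMinus_add ha n hε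
  simp only [coe_matTrPos, matTr_one e hσ, Complex.natCast_re] at this
  linarith

lemma exists_pos_isOpen_lt_dRank_cutMinus (ha : IsSelfAdjoint a) {Y : Set (WeakDual ℂ A)}
    (hYc : IsClosed Y) (hYT : Y ⊆ TS A) (hY : ∀ τ ∈ Y, α < dRank (matTr τ e) a) :
    ∃ ε > 0, ∃ U : Set (WeakDual ℂ A), IsOpen U ∧ Y ⊆ U ∧
      ∀ σ ∈ U ∩ TS A, α < dRank (matTr σ e) (cutMinus a ε) := by
  have hmem := (isCompact_of_isClosed_of_subset_TS hYc hYT).mem_prod_nhdsSet_of_forall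
    (l := 𝓝 (0 : ℝ)) fun τ hτ => by
      rw [← nhds_prod_eq]; exact eventually_lt_dRank_cutMinus e ha (hY τ hτ)
  obtain ⟨t, ht, V, hV, htV⟩ := mem_prod_iff.1 hmem
  obtain ⟨ε, hεt, hε⟩ := Filter.nonempty_of_mem (inter_mem (mem_nhdsWithin_of_mem_nhds ht)
    (self_mem_nhdsWithin : Ioi (0 : ℝ) ∈ 𝓝[>] 0))
  obtain ⟨U, hUo, hYU, hUV⟩ := mem_nhdsSet_iff_exists.1 hV
  refine ⟨ε, hε, U, hUo, hYU, fun σ hσ => ?_⟩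
  exact htV (mk_mem_prod hεt (hUV hσ.1)) (le_of_lt hε) hσ.2

end LowerBound

theorem stmt_0_general {A : Type u} [CStarAlgebra A]
    {k : ℕ} {B : Type v} [CStarAlgebra B] [PartialOrder B] [StarOrderedRing B]
    (e : Mat k A ≃⋆ₐ[ℂ] B) (a : B) (ha : 0 ≤ a)
    {α β : ℝ}
    {Y : Set (WeakDual ℂ A)} (hYT : Y ⊆ TS A) (hYc : IsClosed Y)
    (hd : ∀ τ ∈ Y, α < dRank (matTr τ e) a ∧ dRank (matTr τ e) a < β) :
    ∃ ε : ℝ, 0 < ε ∧ ∃ U : Set (WeakDual ℂ A), IsOpen U ∧ Y ⊆ U ∧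
      ∀ τ ∈ U ∩ TS A, α < dRank (matTr τ e) (cutMinus a ε) ∧
        dRank (matTr τ e) (cutMinus a ε) < β := by
  obtain ⟨ε, hε, U, hUo, hYU, hU⟩ := exists_pos_isOpen_lt_dRank_cutMinus e
    (IsSelfAdjoint.of_nonneg ha) hYc hYT fun τ hτ => (hd τ hτ).1
  refine ⟨ε, hε, U ∩ {σ | (matTr σ e (fEtaCFC ε a)).re < β},
    hUo.inter (isOpen_lt (continuous_re_matTr e _) continuous_const),
    fun τ hτ => ⟨hYU hτ, ?_⟩,
    fun σ ⟨⟨hσU, hσβ⟩, hσ⟩ => ⟨hU σ ⟨hσU, hσ⟩, ?_⟩⟩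
  · exact ((matTrPos e (hYT hτ)).re_fEtaCFC_le_dRank ha ε).trans_lt (hd τ hτ).2
  · exact ((matTrPos e hσ).dRank_cutMinus_le_re_fEtaCFC ha hε).trans_lt hσβ

theorem stmt_0 {A : Type u} [CStarAlgebra A] (hTA : (TS A).Nonempty)
    {k : ℕ} {B : Type v} [CStarAlgebra B] [PartialOrder B] [StarOrderedRing B]
    (e : Mat k A ≃⋆ₐ[ℂ] B) (a : B) (ha : 0 ≤ a)
    {α β : ℝ} (hα : 0 < α) (hαβ : α < β)
    {Y : Set (WeakDual ℂ A)} (hYT : Y ⊆ TS A) (hYc : IsClosed Y)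
    (hd : ∀ τ ∈ Y, α < dRank (matTr τ e) a ∧ dRank (matTr τ e) a < β) :
    ∃ ε : ℝ, 0 < ε ∧ ∃ U : Set (WeakDual ℂ A), IsOpen U ∧ Y ⊆ U ∧
      ∀ τ ∈ U ∩ TS A, α < dRank (matTr τ e) (cutMinus a ε) ∧
        dRank (matTr τ e) (cutMinus a ε) < β :=
  stmt_0_general e a ha hYT hYc hd
end
end

section
/- Let A be a unital C*-algebra, τ a tracial state on A, and let x, y be positive elements of M_k(A) with y ≤ 1_k. Then d_τ(y^{1/2} x y^{1/2}) ≥ d_τ(x) − d_τ(1_k − y), where 1_k denotes the unit of M_k(A). -/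
open Filter Set Topology MeasureTheory
open scoped ComplexOrder Matrix.Norms.L2Operator

noncomputable section

universe u v

/-! Write `f_n(t) = min ((n+1) t) 1`, so that `d_φ(a) = sup_n φ(f_n(a))`. For a positive trace
`φ`, a positive `p` and `s² + u² = 1`, the trace property gives `φ p = φ (s p s) + φ (u p u)`.
With `s = y^{1/2}`, `u = (1-y)^{1/2}` and `p = f_n(x)`, both compressions are positive
contractions dominated by some `c • a`: `a = y^{1/2} x y^{1/2}`, `c = n + 1`, resp. `a = 1 - y`,
`c = 1`. Such a contraction `p` has `φ p ≤ d_φ(a)`: split it once more with `s² = f_m(a)`,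
`u² = 1 - f_m(a)`; the first piece is at most `φ (f_m(a))` and the second at most
`c φ(1) / (m+1)`, because `t (1 - f_m(t)) ≤ 1/(m+1)`. -/

def rankCutoff (n : ℕ) (t : ℝ) : ℝ := min (((n : ℝ) + 1) * t) 1

lemma continuous_rankCutoff (n : ℕ) : Continuous (rankCutoff n) :=
  (continuous_const.mul continuous_id).min continuous_const

lemma rankCutoff_nonneg (n : ℕ) {t : ℝ} (ht : 0 ≤ t) : 0 ≤ rankCutoff n t :=
  le_min (by positivity) zero_le_one

lemma rankCutoff_le_one (n : ℕ) (t : ℝ) : rankCutoff n t ≤ 1 := min_le_right _ _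

lemma rankCutoff_le_mul (n : ℕ) (t : ℝ) : rankCutoff n t ≤ ((n : ℝ) + 1) * t :=
  min_le_left _ _

lemma mul_one_sub_rankCutoff_le (n : ℕ) (t : ℝ) :
    t * (1 - rankCutoff n t) ≤ 1 / ((n : ℝ) + 1) := by
  have hn : (0 : ℝ) < (n : ℝ) + 1 := by positivity
  rcases le_total (((n : ℝ) + 1) * t) 1 with h | h
  · rw [rankCutoff, min_eq_left h, le_div_iff₀ hn]
    nlinarith [sq_nonneg (((n : ℝ) + 1) * t - 1 / 2)]
  · rw [rankCutoff, min_eq_right h, sub_self, mul_zero]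
    positivity

section PositiveTrace

variable {B : Type v} [CStarAlgebra B] [PartialOrder B]

structure IsPositiveTrace (φ : B → ℂ) : Prop where
  map_add : ∀ a b : B, φ (a + b) = φ a + φ b
  map_real_smul : ∀ (r : ℝ) (a : B), φ (r • a) = r • φ a
  re_nonneg : ∀ a : B, 0 ≤ a → 0 ≤ (φ a).re
  map_mul_comm : ∀ a b : B, φ (a * b) = φ (b * a)

namespace IsPositiveTrace

variable {φ : B → ℂ}

lemma re_real_smul (hφ : IsPositiveTrace φ) (r : ℝ) (a : B) :
    (φ (r • a)).re = r * (φ a).re := by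
  rw [hφ.map_real_smul, Complex.real_smul, Complex.re_ofReal_mul]

lemma map_conj_mul_self_comm (hφ : IsPositiveTrace φ) (s w : B) :
    φ (s * (w * w) * s) = φ (w * (s * s) * w) := by
  simpa only [mul_assoc] using hφ.map_mul_comm (s * w) (w * s)

end IsPositiveTrace

variable [StarOrderedRing B]

lemma sqrtCFC_nonneg (a : B) : 0 ≤ sqrtCFC a := cfc_nonneg fun t _ => Real.sqrt_nonneg t

lemma sqrtCFC_mul_self {a : B} (ha : 0 ≤ a) : sqrtCFC a * sqrtCFC a = a := by
  rw [sqrtCFC, ← cfc_mul (fun t : ℝ => Real.sqrt t) (fun t : ℝ => Real.sqrt t) a]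
  conv_rhs => rw [← cfc_id' ℝ a]
  exact cfc_congr fun t ht => Real.mul_self_sqrt (spectrum_nonneg_of_nonneg ha ht)

namespace IsPositiveTrace

variable {φ : B → ℂ}

lemma re_mono (hφ : IsPositiveTrace φ) {a b : B} (h : a ≤ b) : (φ a).re ≤ (φ b).re := by
  have := hφ.re_nonneg (b - a) (sub_nonneg.mpr h)
  rw [← add_sub_cancel a b, hφ.map_add, Complex.add_re]
  linarith

lemma re_cfc_rankCutoff_le_dRank (hφ : IsPositiveTrace φ) (a : B) (n : ℕ) :
    (φ (cfc (rankCutoff n) a)).re ≤ dRank φ a :=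
  le_ciSup (f := fun m : ℕ => (φ (cfc (rankCutoff m) a)).re)
    ⟨(φ 1).re, by
      rintro - ⟨m, rfl⟩
      exact hφ.re_mono (cfc_le_one _ _ fun t _ => rankCutoff_le_one m t)⟩ n

lemma map_eq_conj_add_conj (hφ : IsPositiveTrace φ) {p s u : B} (hp : 0 ≤ p)
    (hsu : s * s + u * u = 1) : φ p = φ (s * p * s) + φ (u * p * u) := by
  set w := sqrtCFC p
  have hw : w * w = p := sqrtCFC_mul_self hp
  rw [← hw, hφ.map_conj_mul_self_comm s w, hφ.map_conj_mul_self_comm u w, ← hφ.map_add,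
    ← add_mul, ← mul_add, hsu, mul_one]

lemma re_le_dRank_add_of_le_smul (hφ : IsPositiveTrace φ) {a p : B} (ha : 0 ≤ a)
    (hp0 : 0 ≤ p) (hp1 : p ≤ 1) {c : ℝ} (hc : 0 ≤ c) (hpa : p ≤ c • a) (m : ℕ) :
    (φ p).re ≤ dRank φ a + c * (φ 1).re * (1 / ((m : ℝ) + 1)) := by
  have hf := continuous_rankCutoff m
  have hg : Continuous fun t : ℝ => 1 - rankCutoff m t := continuous_const.sub hf
  set s := sqrtCFC (cfc (rankCutoff m) a)
  set u := sqrtCFC (cfc (fun t : ℝ => 1 - rankCutoff m t) a)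
  have hs0 : 0 ≤ s := sqrtCFC_nonneg _
  have hu0 : 0 ≤ u := sqrtCFC_nonneg _
  have hss : s * s = cfc (rankCutoff m) a :=
    sqrtCFC_mul_self (cfc_nonneg fun t ht => rankCutoff_nonneg m (spectrum_nonneg_of_nonneg ha ht))
  have huu : u * u = cfc (fun t : ℝ => 1 - rankCutoff m t) a :=
    sqrtCFC_mul_self (cfc_nonneg fun t _ => sub_nonneg.mpr (rankCutoff_le_one m t))
  have hsu : s * s + u * u = 1 := by
    rw [hss, huu, ← cfc_add a _ _ hf.continuousOn hg.continuousOn,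
      ← cfc_const_one ℝ a ha.isSelfAdjoint]
    exact cfc_congr fun t _ => add_sub_cancel _ _
  have hs : (φ (s * p * s)).re ≤ dRank φ a := by
    have h := conjugate_le_conjugate_of_nonneg hp1 hs0
    rw [mul_one, hss] at h
    exact (hφ.re_mono h).trans (hφ.re_cfc_rankCutoff_le_dRank a m)
  have hu : (φ (u * p * u)).re ≤ c * (φ 1).re * (1 / ((m : ℝ) + 1)) := by
    have hle : u * p * u ≤ c • (u * a * u) := by
      simpa only [mul_smul_comm, smul_mul_assoc] using conjugate_le_conjugate_of_nonneg hpa hu0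
    have htr : φ (u * a * u) = φ (cfc (fun t : ℝ => t * (1 - rankCutoff m t)) a) := by
      rw [mul_assoc, hφ.map_mul_comm, mul_assoc, huu, cfc_mul _ _ a, cfc_id' ℝ a]
    have htail : cfc (fun t : ℝ => t * (1 - rankCutoff m t)) a ≤
        algebraMap ℝ B (1 / ((m : ℝ) + 1)) :=
      cfc_le_algebraMap _ _ _ fun t _ => mul_one_sub_rankCutoff_le m t
    have h := hφ.re_mono htail
    rw [Algebra.algebraMap_eq_smul_one, hφ.re_real_smul, ← htr] at h
    calc (φ (u * p * u)).re ≤ c * (φ (u * a * u)).re := by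
          simpa only [hφ.re_real_smul] using hφ.re_mono hle
      _ ≤ c * (1 / ((m : ℝ) + 1) * (φ 1).re) := mul_le_mul_of_nonneg_left h hc
      _ = c * (φ 1).re * (1 / ((m : ℝ) + 1)) := by ring
  rw [hφ.map_eq_conj_add_conj hp0 hsu, Complex.add_re]
  exact add_le_add hs hu

lemma re_le_dRank_of_le_smul (hφ : IsPositiveTrace φ) {a p : B} (ha : 0 ≤ a) (hp0 : 0 ≤ p)
    (hp1 : p ≤ 1) {c : ℝ} (hc : 0 ≤ c) (hpa : p ≤ c • a) : (φ p).re ≤ dRank φ a := by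
  have hlim : Tendsto (fun m : ℕ => dRank φ a + c * (φ 1).re * (1 / ((m : ℝ) + 1))) atTop
      (𝓝 (dRank φ a)) := by
    simpa using (tendsto_one_div_add_atTop_nhds_zero_nat.const_mul (c * (φ 1).re)).const_add
      (dRank φ a)
  exact ge_of_tendsto' hlim (hφ.re_le_dRank_add_of_le_smul ha hp0 hp1 hc hpa)

lemma dRank_le_dRank_conj_add (hφ : IsPositiveTrace φ) {x y : B} (hx : 0 ≤ x) (hy : 0 ≤ y)
    (hy1 : y ≤ 1) : dRank φ x ≤ dRank φ (sqrtCFC y * x * sqrtCFC y) + dRank φ (1 - y) := by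
  have hz : 0 ≤ 1 - y := sub_nonneg.mpr hy1
  set s := sqrtCFC y
  set u := sqrtCFC (1 - y)
  have hs0 : 0 ≤ s := sqrtCFC_nonneg y
  have hu0 : 0 ≤ u := sqrtCFC_nonneg (1 - y)
  have hss : s * s = y := sqrtCFC_mul_self hy
  have huu : u * u = 1 - y := sqrtCFC_mul_self hz
  have hsu : s * s + u * u = 1 := by rw [hss, huu, add_sub_cancel]
  refine ciSup_le fun n => ?_
  change (φ (cfc (rankCutoff n) x)).re ≤ _
  set f := cfc (rankCutoff n) x
  have hf0 : 0 ≤ f :=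
    cfc_nonneg fun t ht => rankCutoff_nonneg n (spectrum_nonneg_of_nonneg hx ht)
  have hf1 : f ≤ 1 := cfc_le_one _ _ fun t _ => rankCutoff_le_one n t
  have hfx : f ≤ ((n : ℝ) + 1) • x :=
    calc f ≤ cfc (fun t : ℝ => ((n : ℝ) + 1) * t) x :=
          cfc_mono (fun t _ => rankCutoff_le_mul n t) (continuous_rankCutoff n).continuousOn
      _ = ((n : ℝ) + 1) • x := cfc_const_mul_id _ x
  have hs : (φ (s * f * s)).re ≤ dRank φ (s * x * s) := by
    refine hφ.re_le_dRank_of_le_smul (conjugate_nonneg_of_nonneg hx hs0)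
      (conjugate_nonneg_of_nonneg hf0 hs0) ?_ (c := (n : ℝ) + 1) (by positivity) ?_
    · calc s * f * s ≤ s * 1 * s := conjugate_le_conjugate_of_nonneg hf1 hs0
        _ = y := by rw [mul_one, hss]
        _ ≤ 1 := hy1
    · simpa only [mul_smul_comm, smul_mul_assoc] using conjugate_le_conjugate_of_nonneg hfx hs0
  have hu : (φ (u * f * u)).re ≤ dRank φ (1 - y) := by
    have hle : u * f * u ≤ 1 - y := by
      simpa only [mul_one, huu] using conjugate_le_conjugate_of_nonneg hf1 hu0
    refine hφ.re_le_dRank_of_le_smul hz (conjugate_nonneg_of_nonneg hf0 hu0)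
      (hle.trans (sub_le_self 1 hy)) zero_le_one ?_
    rwa [one_smul]
  rw [hφ.map_eq_conj_add_conj hf0 hsu, Complex.add_re]
  exact add_le_add hs hu

end IsPositiveTrace

end PositiveTrace

section MatrixTrace

variable {A : Type u} [CStarAlgebra A] {τ : WeakDual ℂ A} {k : ℕ}

lemma IsTracialState.sum_diag_mul_comm (hτ : IsTracialState A τ) (M N : Mat k A) :
    ∑ i, τ ((M * N) i i) = ∑ i, τ ((N * M) i i) := by
  simp only [Matrix.mul_apply, map_sum]
  rw [Finset.sum_comm]
  exact Finset.sum_congr rfl fun i _ => Finset.sum_congr rfl fun j _ => hτ.2.2 _ _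

lemma IsTracialState.sum_diag_star_mul_self_nonneg (hτ : IsTracialState A τ) (M : Mat k A) :
    0 ≤ ∑ i, τ ((star M * M) i i) := by
  simp only [Matrix.mul_apply, Matrix.star_apply, map_sum]
  exact Finset.sum_nonneg fun i _ => Finset.sum_nonneg fun j _ => hτ.2.1 (M j i)

lemma isPositiveTrace_matTr (hτ : IsTracialState A τ) {B : Type v} [CStarAlgebra B]
    [PartialOrder B] [StarOrderedRing B] (e : Mat k A ≃⋆ₐ[ℂ] B) :
    IsPositiveTrace (matTr τ e) where
  map_add a b := by simp [matTr, Finset.sum_add_distrib]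
  map_real_smul r b := by
    simp only [matTr, ← Complex.coe_smul, _root_.map_smul, Matrix.smul_apply, smul_eq_mul,
      ← Finset.mul_sum]
  re_nonneg b hb := by
    obtain ⟨c, rfl⟩ := CStarAlgebra.nonneg_iff_eq_star_mul_self.mp hb
    have h := hτ.sum_diag_star_mul_self_nonneg (e.symm c)
    rw [← map_star, ← map_mul] at h
    exact (Complex.le_def.mp h).1
  map_mul_comm a b := by
    simp only [matTr, map_mul]
    exact hτ.sum_diag_mul_comm _ _

end MatrixTrace

theorem stmt_3 {A : Type u} [CStarAlgebra A] {τ : WeakDual ℂ A} (hτ : τ ∈ TS A)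
    {k : ℕ} {B : Type v} [CStarAlgebra B] [PartialOrder B] [StarOrderedRing B]
    (e : Mat k A ≃⋆ₐ[ℂ] B) (x y : B) (hx : 0 ≤ x) (hy : 0 ≤ y) (hy1 : y ≤ 1) :
    dRank (matTr τ e) x - dRank (matTr τ e) (1 - y) ≤
      dRank (matTr τ e) (sqrtCFC y * x * sqrtCFC y) := by
  have h := (isPositiveTrace_matTr hτ e).dRank_le_dRank_conj_add hx hy hy1
  linarith
end
end
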